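/- (Completeness of the prefix pattern pruning strategy.) Let t = (t_1, …, t_n) be a time series, let k > 0 be the forgetting factor, and let r be a pattern of length m+1 with prefix sub-pattern e = (r_1, …, r_m). Then every forgetting value satisfies 0 < f_j ≤ 1 for 1 ≤ j ≤ n, and consequently fsup(r, t) ≤ |L_r| ≤ |L_e|. In particular, for any threshold minsup, if |L_e| < minsup then fsup(r, t) < minsup, so r cannot be a frequent order-preserving pattern with forgetting mechanism. -/

import Mathlib

open scoped Classical

/-- The rank of the `i`-th entry of a finite sequence `a`:
`rank_a(a_i) = 1 + |{j : a_j < a_i}|`. -/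
noncomputable def rankOf {m : ℕ} (a : Fin m → ℝ) (i : Fin m) : ℕ :=
  1 + (Finset.univ.filter fun j => a j < a i).card

/-- The relative order `R(a) = (rank_a(a_1), …, rank_a(a_m))`. -/
noncomputable def relOrder {m : ℕ} (a : Fin m → ℝ) : Fin m → ℕ :=
  fun i => rankOf a i

/-- `⟨j⟩` (1-based, `m ≤ j ≤ n`) is an occurrence of the length-`m` pattern `p` in
the time series `t = (t_1, …, t_n)`:  `R(t_{j-m+1}, …, t_j) = R(p)`. -/
def isOcc {n m : ℕ} (t : Fin n → ℝ) (p : Fin m → ℝ) (j : ℕ) : Prop :=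
  ∃ (_hm : m ≤ j) (_hn : j ≤ n),
    relOrder (fun i : Fin m => t ⟨j - m + i.val, by have := i.isLt; omega⟩) = relOrder p

/-- The occurrence set `L_p` of pattern `p` in `t`, as a finset of positions. -/
noncomputable def occSet {n m : ℕ} (t : Fin n → ℝ) (p : Fin m → ℝ) : Finset ℕ :=
  (Finset.Icc 1 n).filter fun j => isOcc t p j

/-- The forgetting value of position `j`: `f_j = e^{-k(n-j)}`. -/
noncomputable def fval (k : ℝ) (n j : ℕ) : ℝ :=
  Real.exp (-(k * ((n : ℝ) - (j : ℝ))))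

/-- The support with forgetting mechanism: `fsup(p, t) = Σ_{j ∈ L_p} f_j`. -/
noncomputable def fsup {n m : ℕ} (k : ℝ) (t : Fin n → ℝ) (p : Fin m → ℝ) : ℝ :=
  ∑ j ∈ occSet t p, fval k n j

/- The forgetting values lie in `(0, 1]`, so `fsup(r, t) ≤ |L_r|`. Since the relative order of
a window determines the relative order of every sub-window, an occurrence of `r` ending at `j`
yields an occurrence of its prefix `e` ending at `j - 1`; this shift is injective, so
`|L_r| ≤ |L_e|`. -/

section RelativeOrder

variable {m : ℕ} (a : Fin m → ℝ)

lemma rankOf_le_rankOf {i j : Fin m} (h : a i ≤ a j) : rankOf a i ≤ rankOf a j := by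
  unfold rankOf
  gcongr

lemma rankOf_lt_rankOf {i j : Fin m} (h : a i < a j) : rankOf a i < rankOf a j := by
  unfold rankOf
  gcongr
  refine (Finset.ssubset_iff_of_subset ?_).2 ⟨i, by simpa using h, by simp⟩
  exact Finset.monotone_filter_right _ fun _ _ hx => hx.trans h

lemma rankOf_lt_rankOf_iff (i j : Fin m) : rankOf a i < rankOf a j ↔ a i < a j :=
  ⟨fun h => lt_of_not_ge fun hji => (rankOf_le_rankOf a hji).not_gt h, rankOf_lt_rankOf a⟩

lemma relOrder_comp_eq_of_relOrder_eq {M : ℕ} {a b : Fin M → ℝ} (h : relOrder a = relOrder b)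
    (f : Fin m → Fin M) : relOrder (a ∘ f) = relOrder (b ∘ f) := by
  have hlt (i j : Fin M) : a i < a j ↔ b i < b j := by
    rw [← rankOf_lt_rankOf_iff a, ← rankOf_lt_rankOf_iff b]
    exact Iff.of_eq (congrArg₂ (· < ·) (congrFun h i) (congrFun h j))
  funext i
  simp only [relOrder, rankOf, Function.comp, hlt]

end RelativeOrder

lemma isOcc_prefix {n m : ℕ} {t : Fin n → ℝ} {r : Fin (m + 1) → ℝ} {j : ℕ} (h : isOcc t r j) :
    isOcc t (fun i : Fin m => r i.castSucc) (j - 1) := by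
  obtain ⟨hmj, hjn, hrel⟩ := h
  refine ⟨by omega, by omega, ?_⟩
  convert relOrder_comp_eq_of_relOrder_eq hrel Fin.castSucc using 2
  · funext i
    simp only [Function.comp, Fin.val_castSucc]
    congr 2
    omega
  · rfl

lemma occSet_subset_Icc {n m : ℕ} (t : Fin n → ℝ) (p : Fin m → ℝ) :
    occSet t p ⊆ Finset.Icc 1 n :=
  Finset.filter_subset _ _

lemma occSet_fin_zero {n : ℕ} (t : Fin n → ℝ) (p : Fin 0 → ℝ) :
    occSet t p = Finset.Icc 1 n :=
  Finset.filter_true_of_mem fun _ hj =>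
    ⟨Nat.zero_le _, (Finset.mem_Icc.1 hj).2, funext fun i => i.elim0⟩

lemma card_occSet_le_card_occSet_prefix {n m : ℕ} (t : Fin n → ℝ) (r : Fin (m + 1) → ℝ) :
    (occSet t r).card ≤ (occSet t (fun i : Fin m => r i.castSucc)).card := by
  -- For `m = 0` the shift sends `1` out of `Icc 1 n`, but the empty prefix occurs everywhere.
  rcases Nat.eq_zero_or_pos m with rfl | hm
  · rw [occSet_fin_zero]
    exact Finset.card_le_card (occSet_subset_Icc t r)
  · refine Finset.card_le_card_of_injOn (· - 1) (fun j hj => ?_) (fun a ha b hb hab => ?_)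
    · simp only [Finset.mem_coe, occSet, Finset.mem_filter, Finset.mem_Icc] at hj ⊢
      have hmj := hj.2.1
      exact ⟨⟨by omega, by omega⟩, isOcc_prefix hj.2⟩
    · have ha1 := (Finset.mem_Icc.1 (occSet_subset_Icc t r ha)).1
      have hb1 := (Finset.mem_Icc.1 (occSet_subset_Icc t r hb)).1
      simp only at hab
      omega

lemma fval_pos (k : ℝ) (n j : ℕ) : 0 < fval k n j :=
  Real.exp_pos _

lemma fval_le_one {k : ℝ} (hk : 0 ≤ k) {n j : ℕ} (hj : j ≤ n) : fval k n j ≤ 1 := by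
  have : (j : ℝ) ≤ n := by exact_mod_cast hj
  exact Real.exp_le_one_iff.2 (neg_nonpos.2 (mul_nonneg hk (sub_nonneg.2 this)))

lemma fsup_le_card_occSet {n m : ℕ} {k : ℝ} (hk : 0 ≤ k) (t : Fin n → ℝ) (p : Fin m → ℝ) :
    fsup k t p ≤ (occSet t p).card := by
  unfold fsup
  simpa using Finset.sum_le_card_nsmul (occSet t p) (fval k n) 1 fun j hj =>
    fval_le_one hk (Finset.mem_Icc.1 (occSet_subset_Icc t p hj)).2

/-- Completeness of the prefix pattern pruning strategy: for forgetting factor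
`k > 0`, every forgetting value satisfies `0 < f_j ≤ 1` for `1 ≤ j ≤ n`;
consequently `fsup(r, t) ≤ |L_r| ≤ |L_e|` where `e = (r_1, …, r_m)` is the prefix
sub-pattern of `r`, and if `|L_e| < minsup` then `fsup(r, t) < minsup`, so `r` is
not frequent. -/
theorem prefix_pruning_complete {n m : ℕ} (t : Fin n → ℝ) (k : ℝ) (hk : 0 < k)
    (r : Fin (m + 1) → ℝ) :
    (∀ j : ℕ, 1 ≤ j → j ≤ n → 0 < fval k n j ∧ fval k n j ≤ 1) ∧
    fsup k t r ≤ ((occSet t r).card : ℝ) ∧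
    (occSet t r).card ≤ (occSet t (fun i : Fin m => r i.castSucc)).card ∧
    ∀ minsup : ℝ,
      ((occSet t (fun i : Fin m => r i.castSucc)).card : ℝ) < minsup →
        fsup k t r < minsup := by
  have hcard := card_occSet_le_card_occSet_prefix t r
  have hsup := fsup_le_card_occSet hk.le t r
  refine ⟨fun j _ hjn => ⟨fval_pos k n j, fval_le_one hk.le hjn⟩, hsup, hcard,
    fun minsup hlt => ?_⟩
  calc fsup k t r ≤ (occSet t r).card := hsup
    _ ≤ (occSet t (fun i : Fin m => r i.castSucc)).card := by exact_mod_cast hcard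
    _ < minsup := hlt
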